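/- arXiv:1606.01327 — 3 statements merged into one kernel-verified Lean document; each statement's English description precedes it below -/
import Mathlib

section
/- Let f: ℝⁿ → ℝ be differentiable and β ∈ (0,1]. Then ∇f is β-negatively averaged (i.e., -∇f is β-averaged) if and only if -‖x-y‖² ≤ ⟨∇f(x) - ∇f(y), x-y⟩ ≤ (2β-1)‖x-y‖² for all x, y ∈ ℝⁿ. -/
/-!
Write `g = f + ‖·‖² / 2`, whose gradient is `G = f' + id`. A direct computation shows that
`-f'` is `β`-averaged, i.e. `β⁻¹ • (-f' - (1 - β) • id)` is nonexpansive, exactly when `G` is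
`1/(2β)`-cocoercive: `‖G x - G y‖² ≤ 2β ⟪G x - G y, x - y⟫`. The two-sided inner-product bound
on `f'` says that `G` is monotone with `⟪G x - G y, x - y⟫ ≤ 2β ‖x - y‖²`. Cocoercivity gives
these bounds by Cauchy–Schwarz; conversely, they imply cocoercivity of the gradient `G` by the
Baillon–Haddad theorem, which follows from the quadratic lower and upper models of `g` obtained by
integrating the bounds along segments.
-/

open scoped RealInnerProductSpace

/-- A mapping is nonexpansive if it is 1-Lipschitz. -/
def Nonexpansive {n : ℕ} (T : EuclideanSpace ℝ (Fin n) → EuclideanSpace ℝ (Fin n)) : Prop :=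
  ∀ x y, ‖T x - T y‖ ≤ ‖x - y‖

section Gradient

variable {F : Type*} [NormedAddCommGroup F] [InnerProductSpace ℝ F] [CompleteSpace F]
  {g : F → ℝ} {g' : F → F}

theorem HasGradientAt.hasDerivAt_comp_add_smul {G a v : F} {t : ℝ}
    (hg : HasGradientAt g G (a + t • v)) :
    HasDerivAt (fun s : ℝ => g (a + s • v)) ⟪G, v⟫ t := by
  have hline : HasDerivAt (fun s : ℝ => a + s • v) v t := by
    simpa using ((hasDerivAt_id t).smul_const v).const_add a
  simpa [Function.comp_def] using hg.hasFDerivAt.comp_hasDerivAt t hline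

theorem HasGradientAt.add_half_norm_sq {G x : F} (hg : HasGradientAt g G x) :
    HasGradientAt (fun y => g y + ‖y‖ ^ 2 / 2) (G + x) x := by
  rw [hasGradientAt_iff_hasFDerivAt] at hg ⊢
  have hsq := HasFDerivAt.mul_const (hasStrictFDerivAt_norm_sq x).hasFDerivAt (1 / 2 : ℝ)
  refine (hg.add hsq).congr_fderiv ?_ |>.congr_of_eventuallyEq ?_
  · ext y
    simp [InnerProductSpace.toDual_apply_apply]
  · filter_upwards with y
    rw [Pi.add_apply]
    ring

theorem add_inner_add_sq_le_of_le_inner_sub (hg : ∀ x, HasGradientAt g (g' x) x) {m : ℝ}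
    (hm : ∀ x y, m * ‖x - y‖ ^ 2 ≤ ⟪g' x - g' y, x - y⟫) (x y : F) :
    g x + ⟪g' x, y - x⟫ + m / 2 * ‖y - x‖ ^ 2 ≤ g y := by
  set v := y - x
  set ψ : ℝ → ℝ := fun t => g (x + t • v) - t * ⟪g' x, v⟫ - m / 2 * ‖v‖ ^ 2 * t ^ 2
  have hψ : ∀ t : ℝ, HasDerivAt ψ (⟪g' (x + t • v) - g' x, v⟫ - m * ‖v‖ ^ 2 * t) t := by
    intro t
    refine ((((hg _).hasDerivAt_comp_add_smul).sub (hasDerivAt_mul_const ⟪g' x, v⟫)).sub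
      ((hasDerivAt_pow 2 t).const_mul (m / 2 * ‖v‖ ^ 2))).congr_deriv ?_
    rw [inner_sub_left]
    ring
  have hmono : MonotoneOn ψ (Set.Icc 0 1) := by
    refine monotoneOn_of_hasDerivWithinAt_nonneg (convex_Icc 0 1)
      (fun t _ => (hψ t).continuousAt.continuousWithinAt)
      (fun t _ => (hψ t).hasDerivWithinAt) fun t ht => ?_
    rw [interior_Icc] at ht
    have h := hm (x + t • v) x
    rw [add_sub_cancel_left, real_inner_smul_right, norm_smul, Real.norm_eq_abs,
      abs_of_pos ht.1] at h
    nlinarith [ht.1]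
  have h01 := hmono (by simp) (by simp) zero_le_one
  simp only [ψ, zero_smul, add_zero, zero_mul, sub_zero, one_smul, one_mul, one_pow, ne_eq,
    OfNat.ofNat_ne_zero, not_false_eq_true, zero_pow, mul_zero] at h01
  simp only [v, add_sub_cancel] at h01
  linarith

theorem le_add_inner_add_sq_of_inner_sub_le (hg : ∀ x, HasGradientAt g (g' x) x) {L : ℝ}
    (hL : ∀ x y, ⟪g' x - g' y, x - y⟫ ≤ L * ‖x - y‖ ^ 2) (x y : F) :
    g y ≤ g x + ⟪g' x, y - x⟫ + L / 2 * ‖y - x‖ ^ 2 := by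
  have := add_inner_add_sq_le_of_le_inner_sub (g := -g) (g' := -g') (m := -L)
    (fun x => by rw [hasGradientAt_iff_hasFDerivAt, Pi.neg_apply, map_neg]; exact (hg x).neg)
    (fun x y => by
      rw [Pi.neg_apply, Pi.neg_apply, ← neg_sub', inner_neg_left, neg_mul, neg_le_neg_iff]
      exact hL x y) x y
  simp only [Pi.neg_apply, inner_neg_left] at this
  linarith

theorem baillon_haddad (hg : ∀ x, HasGradientAt g (g' x) x) {L : ℝ} (hL : 0 < L)
    (hmono : ∀ x y, 0 ≤ ⟪g' x - g' y, x - y⟫)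
    (hup : ∀ x y, ⟪g' x - g' y, x - y⟫ ≤ L * ‖x - y‖ ^ 2) (x y : F) :
    ‖g' x - g' y‖ ^ 2 ≤ L * ⟪g' x - g' y, x - y⟫ := by
  have key : ∀ a b, g a + ⟪g' a, b - a⟫ + ‖g' b - g' a‖ ^ 2 / (2 * L) ≤ g b := by
    intro a b
    -- compare the tangent plane at `a` with the quadratic upper model at `b`, at the minimiser
    -- `w` of the latter
    set d := g' b - g' a
    set w := b - L⁻¹ • d
    have hlow := add_inner_add_sq_le_of_le_inner_sub hg (m := 0) (by simpa using hmono) a w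
    have hupp := le_add_inner_add_sq_of_inner_sub_le hg hup b w
    have hwb : w - b = -(L⁻¹ • d) := by simp [w]
    have hwa : w - a = (b - a) - L⁻¹ • d := by simp only [w]; abel
    rw [hwb, norm_neg, norm_smul, inner_neg_right, real_inner_smul_right, Real.norm_eq_abs,
      abs_of_pos (inv_pos.2 hL)] at hupp
    rw [hwa, inner_sub_right, real_inner_smul_right] at hlow
    have hd : ⟪g' b, d⟫ - ⟪g' a, d⟫ = ‖d‖ ^ 2 := by
      rw [← inner_sub_left, real_inner_self_eq_norm_sq]
    field_simp at hupp hlow ⊢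
    nlinarith
  have h1 := key x y
  have h2 := key y x
  rw [norm_sub_rev] at h1
  have hexp : ⟪g' x - g' y, x - y⟫ = -(⟪g' x, y - x⟫ + ⟪g' y, x - y⟫) := by
    simp only [inner_sub_left, inner_sub_right]
    ring
  rw [hexp]
  field_simp at h1 h2
  nlinarith

end Gradient

section InnerProduct

variable {F : Type*} [NormedAddCommGroup F] [InnerProductSpace ℝ F]

theorem norm_sub_smul_le_iff_norm_sq_le_inner {β : ℝ} (hβ : 0 ≤ β) (D u : F) :
    ‖D - β • u‖ ≤ β * ‖u‖ ↔ ‖D‖ ^ 2 ≤ 2 * β * ⟪D, u⟫ := by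
  rw [← sq_le_sq₀ (norm_nonneg _) (by positivity), norm_sub_sq_real, real_inner_smul_right,
    norm_smul, Real.norm_eq_abs, abs_of_nonneg hβ]
  constructor <;> intro h <;> nlinarith

theorem inner_nonneg_and_le_of_norm_sq_le {L : ℝ} (hL : 0 < L) {D u : F}
    (h : ‖D‖ ^ 2 ≤ L * ⟪D, u⟫) : 0 ≤ ⟪D, u⟫ ∧ ⟪D, u⟫ ≤ L * ‖u‖ ^ 2 := by
  have hnonneg : 0 ≤ ⟪D, u⟫ := nonneg_of_mul_nonneg_right ((sq_nonneg _).trans h) hL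
  refine ⟨hnonneg, ?_⟩
  have hCS := real_inner_le_norm D u
  have hD : ‖D‖ ≤ L * ‖u‖ := by
    rcases (norm_nonneg D).eq_or_lt with h0 | h0
    · rw [← h0]
      positivity
    · nlinarith [norm_nonneg u]
  nlinarith [norm_nonneg u]

end InnerProduct

theorem exists_nonexpansive_eq_averaged_iff {n : ℕ}
    (T : EuclideanSpace ℝ (Fin n) → EuclideanSpace ℝ (Fin n)) {β : ℝ} (hβ : 0 < β) :
    (∃ R, Nonexpansive R ∧ ∀ x, T x = (1 - β) • x + β • R x) ↔
      ∀ x y, ‖T x - T y - (1 - β) • (x - y)‖ ≤ β * ‖x - y‖ := by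
  constructor
  · rintro ⟨R, hR, hT⟩ x y
    have hdiff : T x - T y - (1 - β) • (x - y) = β • (R x - R y) := by
      rw [hT, hT]
      module
    rw [hdiff, norm_smul, Real.norm_eq_abs, abs_of_pos hβ]
    exact mul_le_mul_of_nonneg_left (hR x y) hβ.le
  · intro h
    refine ⟨fun x => β⁻¹ • (T x - (1 - β) • x), fun x y => ?_, fun x => ?_⟩
    · rw [← smul_sub, norm_smul, Real.norm_eq_abs, abs_of_pos (inv_pos.2 hβ),
        inv_mul_le_iff₀ hβ]
      have hdiff : T x - (1 - β) • x - (T y - (1 - β) • y) = T x - T y - (1 - β) • (x - y) := by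
        module
      exact hdiff ▸ h x y
    · rw [smul_inv_smul₀ hβ.ne']
      abel

theorem stmt3_general {n : ℕ} (f : EuclideanSpace ℝ (Fin n) → ℝ)
    (f' : EuclideanSpace ℝ (Fin n) → EuclideanSpace ℝ (Fin n))
    (hf : ∀ x, HasGradientAt f (f' x) x)
    (β : ℝ) (hβ0 : 0 < β) :
    (∃ R, Nonexpansive R ∧ ∀ x, -f' x = (1 - β) • x + β • R x) ↔
    (∀ x y, -‖x - y‖^2 ≤ ⟪f' x - f' y, x - y⟫ ∧
            ⟪f' x - f' y, x - y⟫ ≤ (2*β - 1) * ‖x - y‖^2) := by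
  set G := fun x => f' x + x
  have hG : ∀ x, HasGradientAt (fun y => f y + ‖y‖ ^ 2 / 2) (G x) x :=
    fun x => (hf x).add_half_norm_sq
  have haveraged : ∀ x y, ‖-f' x - -f' y - (1 - β) • (x - y)‖ ≤ β * ‖x - y‖ ↔
      ‖G x - G y‖ ^ 2 ≤ 2 * β * ⟪G x - G y, x - y⟫ := fun x y => by
    rw [← norm_sub_smul_le_iff_norm_sq_le_inner hβ0.le, ← norm_neg]
    congr! 2
    module
  have hbounds : ∀ x y, (-‖x - y‖^2 ≤ ⟪f' x - f' y, x - y⟫ ∧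
      ⟪f' x - f' y, x - y⟫ ≤ (2*β - 1) * ‖x - y‖^2) ↔
      (0 ≤ ⟪G x - G y, x - y⟫ ∧ ⟪G x - G y, x - y⟫ ≤ 2 * β * ‖x - y‖ ^ 2) := fun x y => by
    rw [show G x - G y = (f' x - f' y) + (x - y) by simp only [G]; abel, inner_add_left,
      real_inner_self_eq_norm_sq]
    constructor <;> rintro ⟨h1, h2⟩ <;> constructor <;> linarith
  simp_rw [exists_nonexpansive_eq_averaged_iff _ hβ0, haveraged, hbounds]
  exact ⟨fun h x y => inner_nonneg_and_le_of_norm_sq_le (by positivity) (h x y),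
    fun h => baillon_haddad hG (by positivity) (fun x y => (h x y).1) fun x y => (h x y).2⟩

theorem stmt3 {n : ℕ} (f : EuclideanSpace ℝ (Fin n) → ℝ)
    (f' : EuclideanSpace ℝ (Fin n) → EuclideanSpace ℝ (Fin n))
    (hf : ∀ x, HasGradientAt f (f' x) x)
    (β : ℝ) (hβ0 : 0 < β) (hβ1 : β ≤ 1) :
    (∃ R, Nonexpansive R ∧ ∀ x, -f' x = (1 - β) • x + β • R x) ↔
    (∀ x y, -‖x - y‖^2 ≤ ⟪f' x - f' y, x - y⟫ ∧
            ⟪f' x - f' y, x - y⟫ ≤ (2*β - 1) * ‖x - y‖^2) :=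
  stmt3_general f f' hf β hβ0
end

section
/- Let f: ℝⁿ → ℝ be differentiable with ∇f the gradient of f, and δ ∈ [0,1]. Then ∇f is δ-Lipschitz continuous if and only if ∇f is both ((δ+1)/2)-averaged and ((δ+1)/2)-negatively averaged. -/
/-!
Writing `α = (δ + 1) / 2`, a map `T` is `α`-averaged iff
`‖T x - T y - (1 - α) • (x - y)‖ ≤ α * ‖x - y‖`, so a `δ`-Lipschitz map and its negative are
`α`-averaged by the triangle inequality. Conversely, squaring these bounds for `∇f` and `-∇f`
only yields `|⟪∇f x - ∇f y, x - y⟫| ≤ δ * ‖x - y‖ ^ 2`. For a gradient this is enough: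
`h = δ / 2 * ‖·‖ ^ 2 - f` then has a monotone gradient `δ • id - ∇f` with one-sided constant
`2 * δ`, so `h` is convex and `2 * δ`-smooth, and the Baillon–Haddad cocoercivity
`‖∇h x - ∇h y‖ ^ 2 ≤ 2 * δ * ⟪∇h x - ∇h y, x - y⟫` unwinds to `‖∇f x - ∇f y‖ ≤ δ * ‖x - y‖`.
-/

open scoped RealInnerProductSpace

/-- `T` is `α`-averaged: `T = (1-α)Id + αS` for some nonexpansive `S`. -/
def Averaged {n : ℕ} (T : EuclideanSpace ℝ (Fin n) → EuclideanSpace ℝ (Fin n)) (α : ℝ) : Prop :=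
  ∃ S, Nonexpansive S ∧ ∀ x, T x = (1 - α) • x + α • S x

theorem norm_sub_smul_le_of_norm_le {F : Type*} [SeminormedAddCommGroup F] [NormedSpace ℝ F]
    {g d : F} {δ : ℝ} (hδ : δ ≤ 1) (h : ‖g‖ ≤ δ * ‖d‖) :
    ‖g - ((1 - δ) / 2) • d‖ ≤ (δ + 1) / 2 * ‖d‖ :=
  calc ‖g - ((1 - δ) / 2) • d‖ ≤ ‖g‖ + ‖((1 - δ) / 2) • d‖ := norm_sub_le _ _
    _ ≤ δ * ‖d‖ + (1 - δ) / 2 * ‖d‖ := by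
      rw [norm_smul, Real.norm_of_nonneg (by linarith)]; linarith
    _ = (δ + 1) / 2 * ‖d‖ := by ring

section InnerProductSpace

variable {E : Type*} [NormedAddCommGroup E] [InnerProductSpace ℝ E]

theorem inner_smul_sub_sub_smul_sub (L : ℝ) (a b p q : E) :
    ⟪(L • a - p) - (L • b - q), a - b⟫ = L * ‖a - b‖ ^ 2 - ⟪p - q, a - b⟫ := by
  rw [show (L • a - p) - (L • b - q) = L • (a - b) - (p - q) by module, inner_sub_left,
    real_inner_smul_left, real_inner_self_eq_norm_sq]

theorem abs_inner_le_of_norm_sub_smul_le {g d : E} {δ : ℝ}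
    (h₁ : ‖g - ((1 - δ) / 2) • d‖ ≤ (δ + 1) / 2 * ‖d‖)
    (h₂ : ‖-g - ((1 - δ) / 2) • d‖ ≤ (δ + 1) / 2 * ‖d‖) :
    |⟪g, d⟫| ≤ δ * ‖d‖ ^ 2 := by
  have hsq {v : E} (hv : ‖v - ((1 - δ) / 2) • d‖ ≤ (δ + 1) / 2 * ‖d‖) :
      ‖v‖ ^ 2 - (1 - δ) * ⟪v, d⟫ ≤ δ * ‖d‖ ^ 2 := by
    have := pow_le_pow_left₀ (norm_nonneg _) hv 2
    rw [norm_sub_sq_real, norm_smul, real_inner_smul_right, Real.norm_eq_abs, mul_pow, sq_abs]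
      at this
    linear_combination this
  have hg := hsq h₁
  have hng := hsq h₂
  rw [norm_neg, inner_neg_left] at hng
  have hcs := abs_real_inner_le_norm g d
  set p := ⟪g, d⟫
  have hG := norm_nonneg g
  have hD := norm_nonneg d
  -- in either case `(|p| - δ * ‖d‖ ^ 2) * (|p| + ‖d‖ ^ 2) ≤ 0`, by Cauchy–Schwarz
  rcases abs_cases p with ⟨hp, -⟩ | ⟨hp, -⟩ <;> rw [hp] at hcs ⊢
  · nlinarith
  · nlinarith

variable [CompleteSpace E] {f : E → ℝ} {f' : E → E}

theorem HasGradientAt.hasDerivAt_comp_add_smul_s4 {g u w : E} {t : ℝ}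
    (hf : HasGradientAt f g (u + t • w)) :
    HasDerivAt (fun s : ℝ => f (u + s • w)) ⟪g, w⟫ t := by
  have hline : HasDerivAt (fun s : ℝ => u + s • w) w t := by
    simpa using ((hasDerivAt_id t).smul_const w).const_add u
  exact hf.hasFDerivAt.comp_hasDerivAt t hline

theorem HasGradientAt.half_mul_norm_sq_sub {g x : E} (hf : HasGradientAt f g x) (L : ℝ) :
    HasGradientAt (fun y => L / 2 * ‖y‖ ^ 2 - f y) (L • x - g) x := by
  rw [hasGradientAt_iff_hasFDerivAt] at hf ⊢
  refine (((hasStrictFDerivAt_norm_sq x).hasFDerivAt.const_mul (L / 2)).sub hf).congr_fderiv ?_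
  ext y
  simp
  ring

theorem add_inner_le_of_monotone_gradient (hf : ∀ x, HasGradientAt f (f' x) x)
    (hmono : ∀ a b, 0 ≤ ⟪f' a - f' b, a - b⟫) (u v : E) :
    f u + ⟪f' u, v - u⟫ ≤ f v := by
  set w := v - u
  obtain ⟨ξ, ⟨hξ0, -⟩, hslope⟩ := exists_hasDerivAt_eq_slope (fun s : ℝ => f (u + s • w))
    (fun s => ⟪f' (u + s • w), w⟫) one_pos
    (fun s _ => ((hf _).hasDerivAt_comp_add_smul_s4).continuousAt.continuousWithinAt)
    (fun s _ => (hf _).hasDerivAt_comp_add_smul_s4)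
  have hmono_ξ : 0 ≤ ξ * ⟪f' (u + ξ • w) - f' u, w⟫ := by
    simpa [real_inner_smul_right] using hmono (u + ξ • w) u
  have hslope' : ⟪f' (u + ξ • w), w⟫ = f v - f u := by simpa [w] using hslope
  have hincr := nonneg_of_mul_nonneg_right hmono_ξ hξ0
  rw [inner_sub_left] at hincr
  linarith

theorem le_add_inner_add_of_inner_gradient_le (hf : ∀ x, HasGradientAt f (f' x) x) {L : ℝ}
    (hL : ∀ a b, ⟪f' a - f' b, a - b⟫ ≤ L * ‖a - b‖ ^ 2) (u v : E) :
    f v ≤ f u + ⟪f' u, v - u⟫ + L / 2 * ‖v - u‖ ^ 2 := by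
  have hconv := add_inner_le_of_monotone_gradient (fun x => (hf x).half_mul_norm_sq_sub L)
    (fun a b => by rw [inner_smul_sub_sub_smul_sub]; linarith [hL a b]) u v
  have hsq : ‖v - u‖ ^ 2 = ‖v‖ ^ 2 - 2 * ⟪u, v - u⟫ - ‖u‖ ^ 2 := by
    rw [show v = u + (v - u) by abel, norm_add_sq_real]
    simp only [add_sub_cancel_left]; ring
  rw [inner_sub_left, real_inner_smul_left] at hconv
  rw [hsq]
  linarith

theorem add_inner_add_norm_sq_le_of_monotone_gradient (hf : ∀ x, HasGradientAt f (f' x) x)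
    (hmono : ∀ a b, 0 ≤ ⟪f' a - f' b, a - b⟫) {L : ℝ} (hL0 : 0 < L)
    (hL : ∀ a b, ⟪f' a - f' b, a - b⟫ ≤ L * ‖a - b‖ ^ 2) (a b : E) :
    f a + ⟪f' a, b - a⟫ + 1 / (2 * L) * ‖f' b - f' a‖ ^ 2 ≤ f b := by
  set e := f' b - f' a
  set z := b - L⁻¹ • e
  have hlow := add_inner_le_of_monotone_gradient hf hmono a z
  have hup := le_add_inner_add_of_inner_gradient_le hf hL b z
  rw [show z - a = (b - a) - L⁻¹ • e by module, inner_sub_right, real_inner_smul_right] at hlow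
  rw [show z - b = -(L⁻¹ • e) by module, inner_neg_right, real_inner_smul_right, norm_neg,
    norm_smul, Real.norm_of_nonneg (inv_nonneg.2 hL0.le)] at hup
  have hee : ⟪f' b, e⟫ - ⟪f' a, e⟫ = ‖e‖ ^ 2 := by
    rw [← inner_sub_left, real_inner_self_eq_norm_sq]
  have hL2 : L / 2 * (L⁻¹ * ‖e‖) ^ 2 = 1 / (2 * L) * ‖e‖ ^ 2 := by
    field_simp
  have hL1 : L⁻¹ * ⟪f' b, e⟫ - L⁻¹ * ⟪f' a, e⟫ = 2 * (1 / (2 * L) * ‖e‖ ^ 2) := by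
    rw [← mul_sub, hee]; field_simp
  linarith

theorem norm_sq_sub_le_mul_inner_of_monotone_gradient (hf : ∀ x, HasGradientAt f (f' x) x)
    (hmono : ∀ a b, 0 ≤ ⟪f' a - f' b, a - b⟫) {L : ℝ} (hL0 : 0 < L)
    (hL : ∀ a b, ⟪f' a - f' b, a - b⟫ ≤ L * ‖a - b‖ ^ 2) (x y : E) :
    ‖f' x - f' y‖ ^ 2 ≤ L * ⟪f' x - f' y, x - y⟫ := by
  have hxy := add_inner_add_norm_sq_le_of_monotone_gradient hf hmono hL0 hL x y
  have hyx := add_inner_add_norm_sq_le_of_monotone_gradient hf hmono hL0 hL y x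
  rw [norm_sub_rev] at hxy
  have hsum : ⟪f' x, y - x⟫ + ⟪f' y, x - y⟫ = -⟪f' x - f' y, x - y⟫ := by
    rw [← neg_sub x y, inner_neg_right, inner_sub_left]; ring
  have key : 1 / L * ‖f' x - f' y‖ ^ 2 ≤ ⟪f' x - f' y, x - y⟫ := by
    have : 1 / L = 2 * (1 / (2 * L)) := by field_simp
    rw [this]; linarith
  calc ‖f' x - f' y‖ ^ 2 = L * (1 / L * ‖f' x - f' y‖ ^ 2) := by field_simp
    _ ≤ L * ⟪f' x - f' y, x - y⟫ := mul_le_mul_of_nonneg_left key hL0.le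

theorem norm_sub_le_of_abs_inner_gradient_sub_le (hf : ∀ x, HasGradientAt f (f' x) x) {L : ℝ}
    (hL0 : 0 ≤ L) (hL : ∀ a b, |⟪f' a - f' b, a - b⟫| ≤ L * ‖a - b‖ ^ 2) (x y : E) :
    ‖f' x - f' y‖ ≤ L * ‖x - y‖ := by
  -- cocoercivity needs a positive constant, so bound by every `M > L` and let `M` tend to `L`
  have hbound : ∀ M, L < M → ‖f' x - f' y‖ ≤ M * ‖x - y‖ := by
    intro M hLM
    have hM0 : 0 < M := hL0.trans_lt hLM
    have hM (a b : E) : |⟪f' a - f' b, a - b⟫| ≤ M * ‖a - b‖ ^ 2 :=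
      (hL a b).trans (by gcongr)
    have hcoco := norm_sq_sub_le_mul_inner_of_monotone_gradient
      (fun z => (hf z).half_mul_norm_sq_sub M)
      (fun a b => by rw [inner_smul_sub_sub_smul_sub]; linarith [(abs_le.1 (hM a b)).2])
      (by positivity : 0 < 2 * M)
      (fun a b => by rw [inner_smul_sub_sub_smul_sub]; linarith [(abs_le.1 (hM a b)).1]) x y
    rw [inner_smul_sub_sub_smul_sub,
      show M • x - f' x - (M • y - f' y) = M • (x - y) - (f' x - f' y) by module,
      norm_sub_sq_real, norm_smul, real_inner_smul_left, Real.norm_of_nonneg hM0.le,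
      real_inner_comm] at hcoco
    have hsq : ‖f' x - f' y‖ ^ 2 ≤ (M * ‖x - y‖) ^ 2 := by nlinarith
    exact (pow_le_pow_iff_left₀ (norm_nonneg _) (by positivity) two_ne_zero).1 hsq
  have hlim : Filter.Tendsto (fun M => M * ‖x - y‖) (nhdsWithin L (Set.Ioi L))
      (nhds (L * ‖x - y‖)) :=
    ((continuous_id.mul continuous_const).tendsto L).mono_left nhdsWithin_le_nhds
  exact ge_of_tendsto hlim (eventually_nhdsWithin_of_forall hbound)

end InnerProductSpace

theorem averaged_iff_norm_sub_smul_le {n : ℕ}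
    {T : EuclideanSpace ℝ (Fin n) → EuclideanSpace ℝ (Fin n)} {α : ℝ} (hα : 0 < α) :
    Averaged T α ↔ ∀ x y, ‖T x - T y - (1 - α) • (x - y)‖ ≤ α * ‖x - y‖ := by
  constructor
  · rintro ⟨S, hS, hT⟩ x y
    rw [hT x, hT y, show (1 - α) • x + α • S x - ((1 - α) • y + α • S y) - (1 - α) • (x - y) =
      α • (S x - S y) by module, norm_smul, Real.norm_of_nonneg hα.le]
    exact mul_le_mul_of_nonneg_left (hS x y) hα.le
  · intro hT
    refine ⟨fun x => α⁻¹ • (T x - (1 - α) • x), fun x y => ?_, fun x => ?_⟩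
    · rw [← smul_sub, show T x - (1 - α) • x - (T y - (1 - α) • y) = T x - T y - (1 - α) • (x - y)
        by module, norm_smul, Real.norm_of_nonneg (inv_nonneg.2 hα.le), inv_mul_le_iff₀ hα]
      exact hT x y
    · rw [smul_inv_smul₀ hα.ne']
      abel

theorem stmt4 {n : ℕ} (f : EuclideanSpace ℝ (Fin n) → ℝ)
    (f' : EuclideanSpace ℝ (Fin n) → EuclideanSpace ℝ (Fin n))
    (hf : ∀ x, HasGradientAt f (f' x) x)
    (δ : ℝ) (hδ0 : 0 ≤ δ) (hδ1 : δ ≤ 1) :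
    (∀ x y, ‖f' x - f' y‖ ≤ δ * ‖x - y‖) ↔
    (Averaged f' ((δ + 1)/2) ∧ Averaged (fun x => -f' x) ((δ + 1)/2)) := by
  have hα : 0 < (δ + 1) / 2 := by linarith
  simp only [averaged_iff_norm_sub_smul_le hα, show 1 - (δ + 1) / 2 = (1 - δ) / 2 by ring,
    neg_sub_neg]
  constructor
  · intro hLip
    exact ⟨fun x y => norm_sub_smul_le_of_norm_le hδ1 (hLip x y),
      fun x y => norm_sub_smul_le_of_norm_le hδ1 (by rw [norm_sub_rev]; exact hLip x y)⟩
  · rintro ⟨h₁, h₂⟩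
    refine norm_sub_le_of_abs_inner_gradient_sub_le hf hδ0 fun x y => ?_
    exact abs_inner_le_of_norm_sub_smul_le (h₁ x y) (by rw [neg_sub]; exact h₂ x y)
end

section
/- Let f, g: ℝⁿ → ℝ ∪ {∞} be proper closed convex, ρ > 0, γ = ρ⁻¹, and z = ρ⁻¹v. Define the Douglas-Rachford envelope F^DR_γ(z) = (2γ)⁻¹(⟨R_{γf}(z), z⟩ - p²_{γf}(z) - p²_{γg}(R_{γf}(z))) and the ADMM envelope F^ADMM_ρ(v) = (2ρ)⁻¹(⟨R_{ρf*}(v), v⟩ - p²_{ρf*}(v) - p²_{ρ(g*∘(-Id))}(R_{ρf*}(v))). Then F^ADMM_ρ(v) = -F^DR_γ(z). -/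
open scoped RealInnerProductSpace

/-- Fenchel conjugate of an extended-real-valued function. -/
noncomputable def econj {n : ℕ} (g : EuclideanSpace ℝ (Fin n) → EReal)
    (y : EuclideanSpace ℝ (Fin n)) : EReal :=
  ⨆ x, ((⟪y, x⟫ : ℝ) : EReal) - g x

/-- `g` is proper: somewhere finite and never `-∞`. -/
def EProper {n : ℕ} (g : EuclideanSpace ℝ (Fin n) → EReal) : Prop :=
  (∃ x, g x ≠ ⊤) ∧ ∀ x, g x ≠ ⊥

/-- Convexity for extended-real-valued functions. -/
def EConvex {n : ℕ} (g : EuclideanSpace ℝ (Fin n) → EReal) : Prop :=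
  ∀ x y : EuclideanSpace ℝ (Fin n), ∀ a b : ℝ, 0 ≤ a → 0 ≤ b → a + b = 1 →
    g (a • x + b • y) ≤ (a : EReal) * g x + (b : EReal) * g y

/-- `p` is the proximal point `prox_{γ g}(z)`, i.e. it minimizes
`g(·) + ‖· - z‖²/(2γ)`. -/
def IsProx {n : ℕ} (g : EuclideanSpace ℝ (Fin n) → EReal) (γ : ℝ)
    (z p : EuclideanSpace ℝ (Fin n)) : Prop :=
  ∀ y, g p + ((‖p - z‖^2 / (2*γ) : ℝ) : EReal) ≤ g y + ((‖y - z‖^2 / (2*γ) : ℝ) : EReal)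

/-- `r_{γg}(x) = γ g(x) + ½‖x‖²`. -/
noncomputable def rfun {n : ℕ} (g : EuclideanSpace ℝ (Fin n) → EReal) (γ : ℝ)
    (x : EuclideanSpace ℝ (Fin n)) : EReal :=
  (γ : EReal) * g x + ((‖x‖^2 / 2 : ℝ) : EReal)

/-- `p²_{γg}(x) = 2 r*_{γg}(x) - ½‖x‖²`. -/
noncomputable def p2fun {n : ℕ} (g : EuclideanSpace ℝ (Fin n) → EReal) (γ : ℝ)
    (x : EuclideanSpace ℝ (Fin n)) : EReal :=
  (2 : EReal) * econj (rfun g γ) x - ((‖x‖^2 / 2 : ℝ) : EReal)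

/-!
Both envelopes are computed in closed form from proximal points. If `p = prox_{γh}(z)`, then
`r*_{γh}(z) = ⟪z, p⟫ - r_{γh}(p)`, i.e. `p²_{γh}(z) = ½‖z‖² - ‖z - p‖² - 2γ h(p)`. Moreau's
decomposition gives `prox_{ρf*}(ρz) = ρ(z - p)` together with the Fenchel–Young equality
`f*(ρ(z - p)) = ⟪ρ(z - p), p⟫ - f(p)`; the same applies to `g` at `x = R_{γf}(z)`, where
`prox_{γg}(x)` exists because `g` is proper, closed and convex. Since `R_{ρf*}(v) = -ρx`, the
`g* ∘ (-Id)` term is the `g*` term at `ρx`, and both sides reduce to the same polynomial in the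
inner products of `z`, `prox_{γf}(z)` and `prox_{γg}(x)`.
-/

open Filter Topology

theorem LowerSemicontinuous.exists_forall_le_of_lt_dist {α β : Type*} [PseudoMetricSpace α]
    [ProperSpace α] [LinearOrder β] {f : α → β} (hf : LowerSemicontinuous f) {x u₀ : α}
    {R : ℝ} (hu₀ : dist u₀ x ≤ R) (hfar : ∀ u, R < dist u x → f u₀ ≤ f u) :
    ∃ q, ∀ u, f q ≤ f u := by
  obtain ⟨q, -, hq⟩ := (hf.lowerSemicontinuousOn _).exists_isMinOn ⟨u₀, hu₀⟩
    (isCompact_closedBall x R)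
  refine ⟨q, fun u => ?_⟩
  rcases le_or_gt (dist u x) R with hu | hu
  · exact hq hu
  · exact (hq hu₀).trans (hfar u hu)

theorem LowerSemicontinuous.add_coe {α : Type*} [TopologicalSpace α] {g : α → EReal}
    (hg : LowerSemicontinuous g) {φ : α → ℝ} (hφ : Continuous φ) :
    LowerSemicontinuous fun u => g u + (φ u : EReal) :=
  hg.add' (continuous_coe_real_ereal.comp hφ).lowerSemicontinuous fun _ =>
    EReal.continuousAt_add (Or.inr (EReal.coe_ne_bot _)) (Or.inr (EReal.coe_ne_top _))

theorem eventually_add_mul_lt_sq_div {γ : ℝ} (hγ : 0 < γ) (B C : ℝ) :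
    ∀ᶠ r : ℝ in atTop, C + B * r < r ^ 2 / (2 * γ) := by
  filter_upwards [eventually_ge_atTop 1, eventually_ge_atTop (2 * γ * (|B| + |C| + 1))]
    with r hr1 hr2
  rw [lt_div_iff₀ (by positivity)]
  have hB : B * r ≤ |B| * r := mul_le_mul_of_nonneg_right (le_abs_self B) (by linarith)
  have hC : C ≤ |C| * r := (le_abs_self C).trans (le_mul_of_one_le_right (abs_nonneg C) hr1)
  have hsq : r * (2 * γ * (|B| + |C| + 1)) ≤ r ^ 2 := by
    rw [sq]; exact mul_le_mul_of_nonneg_left hr2 (by linarith)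
  nlinarith

theorem EReal.eq_top_or_exists_eq_coe {x : EReal} (hx : x ≠ ⊥) : x = ⊤ ∨ ∃ d : ℝ, x = d := by
  induction x using EReal.rec with
  | bot => exact absurd rfl hx
  | coe d => exact Or.inr ⟨d, rfl⟩
  | top => exact Or.inl rfl

section

variable {n : ℕ} {f g : EuclideanSpace ℝ (Fin n) → EReal} {γ ρ c : ℝ}
  {z p : EuclideanSpace ℝ (Fin n)}

theorem coe_inner_sub_le_econj (hc : g p = c) (μ : EuclideanSpace ℝ (Fin n)) :
    ((⟪μ, p⟫ - c : ℝ) : EReal) ≤ econj g μ := by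
  rw [EReal.coe_sub, ← hc]
  exact le_iSup (fun u => ((⟪μ, u⟫ : ℝ) : EReal) - g u) p

theorem econj_ne_bot (hc : g p = c) (μ : EuclideanSpace ℝ (Fin n)) : econj g μ ≠ ⊥ :=
  ne_bot_of_le_ne_bot (EReal.coe_ne_bot _) (coe_inner_sub_le_econj hc μ)

theorem p2fun_comp_neg (g : EuclideanSpace ℝ (Fin n) → EReal) (ρ : ℝ)
    (w : EuclideanSpace ℝ (Fin n)) : p2fun (fun μ => g (-μ)) ρ w = p2fun g ρ (-w) := by
  simp only [p2fun, econj, rfun, norm_neg]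
  rw [← (Equiv.neg _).iSup_comp]
  simp only [Equiv.neg_apply, neg_neg, norm_neg, inner_neg_left, inner_neg_right]

theorem EConvex.exists_coe_sub_mul_norm_le (hconv : EConvex g) (hlsc : LowerSemicontinuous g)
    (hbot : ∀ x, g x ≠ ⊥) {u₀ : EuclideanSpace ℝ (Fin n)} (hc : g u₀ = c) :
    ∃ A B : ℝ, 0 ≤ B ∧ ∀ u, ((A - B * ‖u - u₀‖ : ℝ) : EReal) ≤ g u := by
  have hu₀ : u₀ ∈ Metric.closedBall u₀ 1 := Metric.mem_closedBall_self zero_le_one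
  obtain ⟨q, -, hq⟩ := (hlsc.lowerSemicontinuousOn _).exists_isMinOn ⟨u₀, hu₀⟩
    (isCompact_closedBall u₀ 1)
  obtain hqtop | ⟨m, hm⟩ := EReal.eq_top_or_exists_eq_coe (hbot q)
  · have : g q ≤ g u₀ := hq hu₀
    rw [hqtop, hc, top_le_iff] at this
    exact absurd this (EReal.coe_ne_top c)
  refine ⟨m, |m - c|, abs_nonneg _, fun u => ?_⟩
  set r := ‖u - u₀‖ with hr
  rcases le_or_gt r 1 with hr1 | hr1
  · have hu : u ∈ Metric.closedBall u₀ 1 := by rwa [Metric.mem_closedBall, dist_eq_norm]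
    refine le_trans ?_ (hm ▸ hq hu)
    exact EReal.coe_le_coe_iff.2 (by nlinarith [abs_nonneg (m - c), norm_nonneg (u - u₀)])
  obtain hu | ⟨d, hd⟩ := EReal.eq_top_or_exists_eq_coe (hbot u)
  · rw [hu]; exact le_top
  have hw : (1 - r⁻¹) • u₀ + r⁻¹ • u ∈ Metric.closedBall u₀ 1 := by
    rw [Metric.mem_closedBall, dist_eq_norm,
      show (1 - r⁻¹) • u₀ + r⁻¹ • u - u₀ = r⁻¹ • (u - u₀) by module, norm_smul,
      Real.norm_of_nonneg (by positivity), ← hr, inv_mul_cancel₀ (by positivity)]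
  have hcv := (hq hw).trans (hconv u₀ u (1 - r⁻¹) r⁻¹
    (sub_nonneg.2 (inv_le_one_of_one_le₀ hr1.le)) (by positivity) (by ring))
  rw [hm, hc, hd, ← EReal.coe_mul, ← EReal.coe_mul, ← EReal.coe_add,
    EReal.coe_le_coe_iff] at hcv
  rw [hd, EReal.coe_le_coe_iff]
  have hscaled : (m - c) * r ≤ d - c := by
    have := mul_le_mul_of_nonneg_left hcv (by positivity : (0 : ℝ) ≤ r)
    field_simp at this
    linarith
  nlinarith [neg_abs_le (m - c), abs_nonneg (m - c)]

theorem exists_isProx (hg : EProper g) (hlsc : LowerSemicontinuous g) (hconv : EConvex g)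
    (hγ : 0 < γ) (x : EuclideanSpace ℝ (Fin n)) : ∃ q, IsProx g γ x q := by
  obtain ⟨u₀, hu₀⟩ := hg.1
  obtain ⟨c, hc⟩ : ∃ c : ℝ, g u₀ = c := ⟨_, (EReal.coe_toReal hu₀ (hg.2 u₀)).symm⟩
  obtain ⟨A, B, hB, hAB⟩ := hconv.exists_coe_sub_mul_norm_le hlsc hg.2 hc
  obtain ⟨R, hR⟩ := eventually_atTop.1 <| eventually_add_mul_lt_sq_div hγ B
    (c + ‖u₀ - x‖ ^ 2 / (2 * γ) - A + B * ‖x - u₀‖)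
  have hΦ := hlsc.add_coe (by fun_prop : Continuous fun u => ‖u - x‖ ^ 2 / (2 * γ))
  refine hΦ.exists_forall_le_of_lt_dist (le_max_right R (dist u₀ x)) fun u hu => ?_
  have hlt := hR (dist u x) ((le_max_left _ _).trans hu.le)
  have htri : ‖u - u₀‖ ≤ ‖u - x‖ + ‖x - u₀‖ := norm_sub_le_norm_sub_add_norm_sub _ _ _
  rw [dist_eq_norm] at hlt
  calc g u₀ + ((‖u₀ - x‖ ^ 2 / (2 * γ) : ℝ) : EReal)
      = ((c + ‖u₀ - x‖ ^ 2 / (2 * γ) : ℝ) : EReal) := by rw [hc, EReal.coe_add]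
    _ ≤ ((A - B * ‖u - u₀‖ + ‖u - x‖ ^ 2 / (2 * γ) : ℝ) : EReal) :=
      EReal.coe_le_coe_iff.2 (by nlinarith [mul_le_mul_of_nonneg_left htri hB])
    _ ≤ g u + ((‖u - x‖ ^ 2 / (2 * γ) : ℝ) : EReal) := by
      rw [EReal.coe_add]; exact add_le_add_left (hAB u) _

theorem IsProx.exists_eq_coe (hg : EProper g) (h : IsProx g γ z p) : ∃ c : ℝ, g p = c := by
  refine ⟨(g p).toReal, (EReal.coe_toReal (fun htop => ?_) (hg.2 p)).symm⟩
  obtain ⟨x, hx⟩ := hg.1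
  have hle := h x
  rw [htop, EReal.top_add_coe, top_le_iff] at hle
  exact (EReal.add_lt_top hx (EReal.coe_ne_top _)).ne hle

theorem IsProx.econj_rfun_eq (hbot : ∀ x, g x ≠ ⊥) (hγ : 0 < γ) (hc : g p = c)
    (h : IsProx g γ z p) :
    econj (rfun g γ) z = ((⟪z, p⟫ - (γ * c + ‖p‖ ^ 2 / 2) : ℝ) : EReal) := by
  have hrp : rfun g γ p = ((γ * c + ‖p‖ ^ 2 / 2 : ℝ) : EReal) := by
    rw [rfun, hc, EReal.coe_add, EReal.coe_mul]
  refine le_antisymm (iSup_le fun u => ?_) ?_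
  · obtain hu | ⟨d, hd⟩ := EReal.eq_top_or_exists_eq_coe (hbot u)
    · rw [rfun, hu, EReal.coe_mul_top_of_pos (by exact_mod_cast hγ), EReal.top_add_coe,
        EReal.sub_top]
      exact bot_le
    have hmin := h u
    rw [hc, hd, ← EReal.coe_add, ← EReal.coe_add, EReal.coe_le_coe_iff, norm_sub_sq_real,
      norm_sub_sq_real] at hmin
    rw [rfun, hd, ← EReal.coe_mul, ← EReal.coe_add, ← EReal.coe_sub, EReal.coe_le_coe_iff,
      real_inner_comm p z, real_inner_comm u z]
    have := mul_le_mul_of_nonneg_left hmin hγ.le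
    field_simp at this
    linarith
  · rw [EReal.coe_sub, ← hrp]
    exact le_iSup (fun u => ((⟪z, u⟫ : ℝ) : EReal) - rfun g γ u) p

theorem IsProx.p2fun_eq (hbot : ∀ x, g x ≠ ⊥) (hγ : 0 < γ) (hc : g p = c)
    (h : IsProx g γ z p) :
    p2fun g γ z = ((‖z‖ ^ 2 / 2 - ‖z - p‖ ^ 2 - 2 * γ * c : ℝ) : EReal) := by
  rw [p2fun, h.econj_rfun_eq hbot hγ hc, show (2 : EReal) = ((2 : ℝ) : EReal) from rfl,
    ← EReal.coe_mul, ← EReal.coe_sub, EReal.coe_eq_coe_iff, norm_sub_sq_real]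
  ring

theorem IsProx.coe_add_inner_le (hconv : EConvex g) (hbot : ∀ x, g x ≠ ⊥)
    (hc : g p = c) (h : IsProx g γ z p) (y : EuclideanSpace ℝ (Fin n)) :
    ((c + γ⁻¹ * ⟪z - p, y - p⟫ : ℝ) : EReal) ≤ g y := by
  obtain hy | ⟨d, hd⟩ := EReal.eq_top_or_exists_eq_coe (hbot y)
  · rw [hy]; exact le_top
  rw [hd, EReal.coe_le_coe_iff]
  set K := ‖y - p‖ ^ 2 / (2 * γ)
  -- compare `p` with the points `p + t • (y - p)` of the segment towards `y`, then let `t → 0`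
  have key : ∀ t ∈ Set.Ioc (0 : ℝ) 1, c + γ⁻¹ * ⟪z - p, y - p⟫ - d ≤ t * K := by
    rintro t ⟨ht0, ht1⟩
    have hcv := hconv p y (1 - t) t (by linarith) ht0.le (by ring)
    rw [show (1 - t) • p + t • y = p + t • (y - p) by module, hc, hd] at hcv
    have hmin := (h (p + t • (y - p))).trans (add_le_add_left hcv _)
    rw [hc, ← EReal.coe_mul, ← EReal.coe_mul, ← EReal.coe_add, ← EReal.coe_add,
      ← EReal.coe_add, EReal.coe_le_coe_iff, norm_sub_rev p z,
      show p + t • (y - p) - z = -(z - p) + t • (y - p) by module, norm_add_sq_real,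
      norm_smul, inner_neg_left, real_inner_smul_right, norm_neg, Real.norm_of_nonneg ht0.le]
      at hmin
    have hscaled : t * (c + γ⁻¹ * ⟪z - p, y - p⟫ - d) ≤ t * (t * K) := by
      linear_combination hmin
    exact le_of_mul_le_mul_left hscaled ht0
  have hlim : Tendsto (fun t => t * K) (𝓝[>] 0) (𝓝 0) := by
    have : Tendsto (fun t : ℝ => t * K) (𝓝 0) (𝓝 (0 * K)) := tendsto_id.mul_const K
    rw [zero_mul] at this
    exact this.mono_left nhdsWithin_le_nhds
  have hev : ∀ᶠ t in 𝓝[>] 0, c + γ⁻¹ * ⟪z - p, y - p⟫ - d ≤ t * K := by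
    filter_upwards [Ioc_mem_nhdsGT zero_lt_one] with t ht using key t ht
  linarith [ge_of_tendsto hlim hev]

theorem IsProx.econj_eq (hconv : EConvex f) (hbot : ∀ x, f x ≠ ⊥) (hc : f p = c)
    (h : IsProx f ρ⁻¹ z p) : econj f (ρ • (z - p)) = ((⟪ρ • (z - p), p⟫ - c : ℝ) : EReal) := by
  refine le_antisymm (iSup_le fun y => ?_) (coe_inner_sub_le_econj hc _)
  obtain hy | ⟨d, hd⟩ := EReal.eq_top_or_exists_eq_coe (hbot y)
  · rw [hy, EReal.sub_top]; exact bot_le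
  have hsub := h.coe_add_inner_le hconv hbot hc y
  rw [hd, inv_inv, EReal.coe_le_coe_iff, inner_sub_right] at hsub
  rw [hd, ← EReal.coe_sub, EReal.coe_le_coe_iff, real_inner_smul_left, real_inner_smul_left]
  linear_combination hsub

theorem IsProx.econj_add_sq_le (hconv : EConvex f) (hbot : ∀ x, f x ≠ ⊥) (hρ : ρ ≠ 0)
    (hc : f p = c) (h : IsProx f ρ⁻¹ z p) (μ : EuclideanSpace ℝ (Fin n)) :
    econj f (ρ • (z - p)) + ((‖ρ • (z - p) - ρ • z‖ ^ 2 / (2 * ρ) +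
        ‖μ - ρ • (z - p)‖ ^ 2 / (2 * ρ) : ℝ) : EReal) ≤
      econj f μ + ((‖μ - ρ • z‖ ^ 2 / (2 * ρ) : ℝ) : EReal) := by
  refine le_of_eq_of_le ?_ (add_le_add_left (coe_inner_sub_le_econj hc μ) _)
  rw [h.econj_eq hconv hbot hc, ← EReal.coe_add, ← EReal.coe_add, EReal.coe_eq_coe_iff,
    show ρ • (z - p) - ρ • z = -(ρ • p) by module,
    show μ - ρ • z = (μ - ρ • (z - p)) - ρ • p by module, norm_neg,
    norm_sub_sq_real (μ - ρ • (z - p)), inner_sub_left, real_inner_smul_right,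
    real_inner_smul_right, real_inner_smul_left, norm_smul, Real.norm_eq_abs, mul_pow, sq_abs]
  field_simp
  ring

theorem IsProx.isProx_econj (hconv : EConvex f) (hbot : ∀ x, f x ≠ ⊥) (hρ : 0 < ρ)
    (hc : f p = c) (h : IsProx f ρ⁻¹ z p) : IsProx (econj f) ρ (ρ • z) (ρ • (z - p)) := by
  refine fun μ => le_trans ?_ (h.econj_add_sq_le hconv hbot hρ.ne' hc μ)
  gcongr
  exact le_add_of_nonneg_right (by positivity)

theorem IsProx.eq_of_isProx_econj (hconv : EConvex f) (hbot : ∀ x, f x ≠ ⊥) (hρ : 0 < ρ)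
    (hc : f p = c) (h : IsProx f ρ⁻¹ z p) {p' : EuclideanSpace ℝ (Fin n)}
    (h' : IsProx (econj f) ρ (ρ • z) p') : p' = ρ • (z - p) := by
  have hle := (h.econj_add_sq_le hconv hbot hρ.ne' hc p').trans (h' (ρ • (z - p)))
  rw [h.econj_eq hconv hbot hc, ← EReal.coe_add, ← EReal.coe_add,
    EReal.coe_le_coe_iff] at hle
  have hsq : ‖p' - ρ • (z - p)‖ ^ 2 ≤ 0 := by
    have : ‖p' - ρ • (z - p)‖ ^ 2 / (2 * ρ) ≤ 0 := by linarith
    simpa using (div_le_iff₀ (by positivity)).1 this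
  exact sub_eq_zero.1 (norm_eq_zero.1 (pow_eq_zero_iff two_ne_zero |>.1
    (le_antisymm hsq (sq_nonneg _))))

end

theorem stmt14_general {n : ℕ} (f g : EuclideanSpace ℝ (Fin n) → EReal)
    (hfp : EProper f) (hfc : EConvex f)
    (hgp : EProper g) (hglsc : LowerSemicontinuous g) (hgc : EConvex g)
    (ρ γ : ℝ) (hρ : 0 < ρ) (hγ : γ = ρ⁻¹)
    (v z : EuclideanSpace ℝ (Fin n)) (hz : z = ρ⁻¹ • v)
    (pfs pf : EuclideanSpace ℝ (Fin n))
    (hpfs : IsProx (econj f) ρ v pfs)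
    (hpf : IsProx f γ z pf) :
    (((2*ρ)⁻¹ : ℝ) : EReal) *
        (((⟪(2:ℝ) • pfs - v, v⟫ : ℝ) : EReal) - p2fun (econj f) ρ v -
          p2fun (fun μ => econj g (-μ)) ρ ((2:ℝ) • pfs - v)) =
      -((((2*γ)⁻¹ : ℝ) : EReal) *
        (((⟪(2:ℝ) • pf - z, z⟫ : ℝ) : EReal) - p2fun f γ z -
          p2fun g γ ((2:ℝ) • pf - z))) := by
  subst hγ
  obtain rfl : v = ρ • z := by rw [hz, smul_smul, mul_inv_cancel₀ hρ.ne', one_smul]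
  have hρinv : 0 < ρ⁻¹ := inv_pos.2 hρ
  obtain ⟨a, ha⟩ := hpf.exists_eq_coe hfp
  obtain ⟨q, hq⟩ := exists_isProx hgp hglsc hgc hρinv ((2:ℝ) • pf - z)
  obtain ⟨b, hb⟩ := hq.exists_eq_coe hgp
  obtain rfl := hpf.eq_of_isProx_econj hfc hfp.2 hρ ha hpfs
  have hgs := hq.isProx_econj hgc hgp.2 hρ hb
  rw [show (2:ℝ) • ρ • (z - pf) - ρ • z = -(ρ • ((2:ℝ) • pf - z)) by module, p2fun_comp_neg,
    neg_neg, hpf.p2fun_eq hfp.2 hρinv ha, hq.p2fun_eq hgp.2 hρinv hb,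
    hpfs.p2fun_eq (econj_ne_bot ha) hρ (hpf.econj_eq hfc hfp.2 ha),
    hgs.p2fun_eq (econj_ne_bot hb) hρ (hq.econj_eq hgc hgp.2 hb)]
  rw [← EReal.coe_sub, ← EReal.coe_sub, ← EReal.coe_sub, ← EReal.coe_sub, ← EReal.coe_mul,
    ← EReal.coe_mul, ← EReal.coe_neg, EReal.coe_eq_coe_iff]
  simp only [← real_inner_self_eq_norm_sq, inner_sub_left, inner_sub_right, inner_neg_left,
    real_inner_smul_left, real_inner_smul_right, real_inner_comm pf z, real_inner_comm q z,
    real_inner_comm q pf]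
  field_simp
  ring

theorem stmt14 {n : ℕ} (f g : EuclideanSpace ℝ (Fin n) → EReal)
    (hfp : EProper f) (hflsc : LowerSemicontinuous f) (hfc : EConvex f)
    (hgp : EProper g) (hglsc : LowerSemicontinuous g) (hgc : EConvex g)
    (ρ γ : ℝ) (hρ : 0 < ρ) (hγ : γ = ρ⁻¹)
    (v z : EuclideanSpace ℝ (Fin n)) (hz : z = ρ⁻¹ • v)
    (pfs pf : EuclideanSpace ℝ (Fin n))
    (hpfs : IsProx (econj f) ρ v pfs)
    (hpf : IsProx f γ z pf) :
    (((2*ρ)⁻¹ : ℝ) : EReal) *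
        (((⟪(2:ℝ) • pfs - v, v⟫ : ℝ) : EReal) - p2fun (econj f) ρ v -
          p2fun (fun μ => econj g (-μ)) ρ ((2:ℝ) • pfs - v)) =
      -((((2*γ)⁻¹ : ℝ) : EReal) *
        (((⟪(2:ℝ) • pf - z, z⟫ : ℝ) : EReal) - p2fun f γ z -
          p2fun g γ ((2:ℝ) • pf - z))) :=
  stmt14_general f g hfp hfc hgp hglsc hgc ρ γ hρ hγ v z hz pfs pf hpfs hpf
end
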